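/- Every extreme point F of the credal set of a p-box on Ω = {x_1 < ... < x_n} satisfies, for every i, F(x_i) ∈ {F_low(x_i), F_up(x_i), F(x_{i−1}), F(x_{i+1})} (with F(x_0) := 0, index i < n for the last option). -/

import Mathlib

/-- A distribution function on `Ω = {x_1 < ... < x_{n+1}}`, modelled as `Fin (n+1)`. -/
def IsDistFun (n : ℕ) (F : Fin (n + 1) → ℝ) : Prop :=
  Monotone F ∧ (∀ i, F i ∈ Set.Icc (0 : ℝ) 1) ∧ F (Fin.last n) = 1

/-- The value of `F` at the predecessor, with the convention `F(x_0) = 0`. -/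
def prevVal (n : ℕ) (F : Fin (n + 1) → ℝ) (i : Fin (n + 1)) : ℝ :=
  if h : (i : ℕ) = 0 then 0
  else F ⟨(i : ℕ) - 1, Nat.lt_of_le_of_lt (Nat.sub_le _ _) i.isLt⟩

/-- The credal set of the p-box `(Flow, Fup)`. -/
def credal (n : ℕ) (Flow Fup : Fin (n + 1) → ℝ) : Set (Fin (n + 1) → ℝ) :=
  {F | IsDistFun n F ∧ Flow ≤ F ∧ F ≤ Fup}

/-!
If `x_i` is not the last point, moving the single value `F(x_i)` anywhere between
`max (F_low(x_i), F(x_{i-1}))` and `min (F_up(x_i), F(x_{i+1}))` keeps `F` in the credal set.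
Were `F(x_i)` strictly inside that interval, `F` would be the midpoint of the two perturbations
`F(x_i) ± ε`, so an extreme `F` takes one of the endpoint values. At the last point `F = 1 = F_up`.
-/

open Set Function

section ExtremePoints

variable {𝕜 : Type*} [Field 𝕜] [LinearOrder 𝕜] [IsStrictOrderedRing 𝕜]

theorem eq_zero_of_add_mem_of_sub_mem_of_mem_extremePoints {E : Type*} [AddCommGroup E]
    [Module 𝕜 E] {A : Set E} {x v : E} (hx : x ∈ A.extremePoints 𝕜) (hadd : x + v ∈ A)
    (hsub : x - v ∈ A) : v = 0 := by
  have : Invertible (2 : 𝕜) := invertibleOfNonzero two_ne_zero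
  simpa using hx.2 hadd hsub (mem_openSegment_add_sub (𝕜 := 𝕜) x v)

theorem apply_notMem_Ioo_of_mem_extremePoints {ι : Type*} [DecidableEq ι] {A : Set (ι → 𝕜)}
    {x : ι → 𝕜} (hx : x ∈ A.extremePoints 𝕜) {i : ι} {a b : 𝕜}
    (h : ∀ t ∈ Icc a b, update x i t ∈ A) : x i ∉ Ioo a b := by
  rintro ⟨ha, hb⟩
  have hupdate : ∀ s, update x i (x i + s) = x + Pi.single i s := fun s => by
    ext j
    rcases eq_or_ne j i with rfl | hj <;> simp [*]
  set ε := min (x i - a) (b - x i)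
  have hε : 0 < ε := lt_min (sub_pos.2 ha) (sub_pos.2 hb)
  have hadd : x + Pi.single i ε ∈ A := by
    rw [← hupdate]
    exact h _ ⟨by linarith, by linarith [min_le_right (x i - a) (b - x i)]⟩
  have hsub : x - Pi.single i ε ∈ A := by
    rw [sub_eq_add_neg, ← Pi.single_neg, ← hupdate]
    exact h _ ⟨by linarith [min_le_left (x i - a) (b - x i)], by linarith⟩
  have := congrFun (eq_zero_of_add_mem_of_sub_mem_of_mem_extremePoints hx hadd hsub) i
  simp only [Pi.single_eq_same, Pi.zero_apply] at this
  exact hε.ne' this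

end ExtremePoints

theorem Monotone.update {α β : Type*} [PartialOrder α] [Preorder β] [DecidableEq α]
    {f : α → β} (hf : Monotone f) {i : α} {t : β} (hlt : ∀ j < i, f j ≤ t)
    (hgt : ∀ j, i < j → t ≤ f j) : Monotone (update f i t) := by
  intro j k hjk
  rcases eq_or_ne j i with rfl | hj <;> rcases eq_or_ne k j with rfl | hk
  · exact le_rfl
  · simpa [hk] using hgt k (lt_of_le_of_ne hjk (Ne.symm hk))
  · exact le_rfl
  · rcases eq_or_ne k i with rfl | hki
    · simpa [hj] using hlt j (lt_of_le_of_ne hjk hj)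
    · simpa [hj, hki] using hf hjk

section PrevVal

variable {n : ℕ} {F : Fin (n + 1) → ℝ}

theorem le_prevVal_of_lt (hF : Monotone F) {i j : Fin (n + 1)} (hji : j < i) :
    F j ≤ prevVal n F i := by
  have hi : (i : ℕ) ≠ 0 := by omega
  rw [prevVal, dif_neg hi]
  exact hF (Fin.le_def.2 (by simp; omega))

theorem IsDistFun.prevVal_nonneg (hF : IsDistFun n F) (i : Fin (n + 1)) :
    0 ≤ prevVal n F i := by
  unfold prevVal
  split
  · exact le_rfl
  · exact (hF.2.1 _).1

theorem IsDistFun.prevVal_le (hF : IsDistFun n F) (i : Fin (n + 1)) : prevVal n F i ≤ F i := by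
  unfold prevVal
  split
  · exact (hF.2.1 i).1
  · exact hF.1 (Fin.le_def.2 (by simp))

end PrevVal

theorem update_mem_credal {n : ℕ} {Flow Fup F : Fin (n + 1) → ℝ} (hF : F ∈ credal n Flow Fup)
    {i : Fin (n + 1)} (hi : (i : ℕ) + 1 < n + 1) {t : ℝ}
    (ht : t ∈ Icc (max (Flow i) (prevVal n F i)) (min (Fup i) (F ⟨(i : ℕ) + 1, hi⟩))) :
    update F i t ∈ credal n Flow Fup := by
  obtain ⟨hdist, hlowF, hFup⟩ := hF
  simp only [mem_Icc, max_le_iff, le_min_iff] at ht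
  obtain ⟨⟨hlow_t, hprev_t⟩, hup_t, hnext_t⟩ := ht
  have hmono : Monotone (update F i t) :=
    hdist.1.update (fun j hj => (le_prevVal_of_lt hdist.1 hj).trans hprev_t)
      (fun j hj => hnext_t.trans (hdist.1 (Fin.le_def.2 (by simp; omega))))
  have hlast : Fin.last n ≠ i := fun h => by simp [← h] at hi
  refine ⟨⟨hmono, fun j => ?_, by simpa [hlast] using hdist.2.2⟩,
    le_update_iff.2 ⟨hlow_t, fun j _ => hlowF j⟩, update_le_iff.2 ⟨hup_t, fun j _ => hFup j⟩⟩
  rcases eq_or_ne j i with rfl | hj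
  · simp only [update_self, mem_Icc]
    exact ⟨(hdist.prevVal_nonneg j).trans hprev_t, hnext_t.trans (hdist.2.1 _).2⟩
  · simpa [hj] using hdist.2.1 j

theorem extreme_point_local_values_general (n : ℕ) (Flow Fup : Fin (n + 1) → ℝ)
    (hup : IsDistFun n Fup)
    (F : Fin (n + 1) → ℝ)
    (hF : F ∈ Set.extremePoints ℝ (credal n Flow Fup)) :
    ∀ i : Fin (n + 1), F i = Flow i ∨ F i = Fup i ∨ F i = prevVal n F i ∨
      ∃ hi : (i : ℕ) + 1 < n + 1, F i = F ⟨(i : ℕ) + 1, hi⟩ := by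
  obtain ⟨hdist, hlowF, hFup⟩ := hF.1
  intro i
  by_cases hi : (i : ℕ) + 1 < n + 1
  · have hlo : max (Flow i) (prevVal n F i) ≤ F i := max_le (hlowF i) (hdist.prevVal_le i)
    have hhi : F i ≤ min (Fup i) (F ⟨(i : ℕ) + 1, hi⟩) :=
      le_min (hFup i) (hdist.1 (Fin.le_def.2 (by simp)))
    have hend := apply_notMem_Ioo_of_mem_extremePoints hF
      (fun t ht => update_mem_credal hF.1 hi ht)
    rw [mem_Ioo, not_and_or, not_lt, not_lt] at hend
    rcases hend with hend | hend
    · have hval := le_antisymm hend hlo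
      rcases max_choice (Flow i) (prevVal n F i) with h | h
      · exact Or.inl (hval.trans h)
      · exact Or.inr (Or.inr (Or.inl (hval.trans h)))
    · have hval := le_antisymm hhi hend
      rcases min_choice (Fup i) (F ⟨(i : ℕ) + 1, hi⟩) with h | h
      · exact Or.inr (Or.inl (hval.trans h))
      · exact Or.inr (Or.inr (Or.inr ⟨hi, hval.trans h⟩))
  · have hlast : i = Fin.last n := Fin.ext (by simp; omega)
    exact Or.inr (Or.inl (by rw [hlast, hdist.2.2, hup.2.2]))

/-- Every extreme point `F` of the credal set of a p-box satisfies, for every `i`,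
`F(x_i) ∈ {Flow(x_i), Fup(x_i), F(x_{i-1}), F(x_{i+1})}` (with `F(x_0) := 0` and the
last option only available for `i < n`). -/
theorem extreme_point_local_values (n : ℕ) (Flow Fup : Fin (n + 1) → ℝ)
    (hlow : IsDistFun n Flow) (hup : IsDistFun n Fup) (hbox : Flow ≤ Fup)
    (F : Fin (n + 1) → ℝ)
    (hF : F ∈ Set.extremePoints ℝ (credal n Flow Fup)) :
    ∀ i : Fin (n + 1), F i = Flow i ∨ F i = Fup i ∨ F i = prevVal n F i ∨
      ∃ hi : (i : ℕ) + 1 < n + 1, F i = F ⟨(i : ℕ) + 1, hi⟩ :=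
  extreme_point_local_values_general n Flow Fup hup F hF
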